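/- With $N \geq 2$, $k = \cos(\pi/(2N))$, $f = (1-k)/(1+k)$, $l = 1/(1+k)$, the block matrix $Z_N^* = \begin{pmatrix} N/l & -e_{4N}^T \\ -e_{4N} & M_N \end{pmatrix}$ of size $(4N+1) \times (4N+1)$ is positive semidefinite, where $M_N = l \cdot A_{C_{4N}} + \begin{pmatrix} I_{2N} & f I_{2N} \\ f I_{2N} & I_{2N} \end{pmatrix}$ and $e_{4N}$ is the all-ones vector. -/

import Mathlib

/-!
By the Schur complement, `Z` is positive semidefinite once `M - (l / N) J` is, `J` being the
all-ones matrix. `M = l A + D` is circulant on `ℤ/4N` (the cycle plus the antipodal shift by `2N`),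
so the Fourier modes diagonalise it: with `θ = π / (2N)`,
`M = (4N)⁻¹ ∑ₘ λₘ (cos (θ m (i - j)))ᵢⱼ` where `λₘ = 2 l cos (θ m) + 1 + f (-1)ᵐ`,
and every cosine kernel is a sum of two rank-one positive semidefinite matrices.
The mode `m = 0` is exactly `(l / N) J`, because `λ₀ = 4 l`. The other eigenvalues are
nonnegative: `λₘ = 2 l (1 + cos (θ m))` for even `m`, and `λₘ = 2 l (cos (θ m) + cos θ)` for odd `m`,
since an odd multiple of `θ` never comes closer than `θ` to `π` modulo `2π`.
-/

open Real Finset Matrix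

noncomputable def cosKernel {ι : Type*} (x : ι → ℝ) (t : ℝ) : Matrix ι ι ℝ :=
  Matrix.of fun i j => cos (t * (x i - x j))

theorem cosKernel_eq_add_vecMulVec {ι : Type*} (x : ι → ℝ) (t : ℝ) :
    cosKernel x t = vecMulVec (fun i => cos (t * x i)) (fun i => cos (t * x i))
      + vecMulVec (fun i => sin (t * x i)) (fun i => sin (t * x i)) := by
  ext i j
  simp only [cosKernel, of_apply, Matrix.add_apply, vecMulVec_apply, mul_sub, cos_sub]

theorem posSemidef_cosKernel {ι : Type*} [Fintype ι] (x : ι → ℝ) (t : ℝ) :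
    (cosKernel x t).PosSemidef := by
  rw [cosKernel_eq_add_vecMulVec]
  exact (posSemidef_vecMulVec_self_star _).add (posSemidef_vecMulVec_self_star _)

theorem sum_range_cos_eq_ite (n : ℕ) [NeZero n] (e : ℤ) :
    ∑ m ∈ range n, cos (2 * π / n * m * e) = if (n : ℤ) ∣ e then (n : ℝ) else 0 := by
  set ζ := ZMod.stdAddChar (e : ZMod n)
  have hpow (m : ℕ) : ζ ^ m = Complex.exp ((2 * π / n * m * e : ℝ) * Complex.I) := by
    rw [← AddChar.map_nsmul_eq_pow, nsmul_eq_mul, ← Int.cast_natCast, ← Int.cast_mul,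
      ZMod.stdAddChar_coe]
    push_cast
    ring_nf
  have hsum : ∑ m ∈ range n, cos (2 * π / n * m * e) = (∑ m ∈ range n, ζ ^ m).re := by
    simp only [Complex.re_sum, hpow, Complex.exp_ofReal_mul_I_re]
  rw [hsum]
  have hζ : ζ = 1 ↔ (n : ℤ) ∣ e := by
    rw [← ZMod.intCast_zmod_eq_zero_iff_dvd, ← ZMod.injective_stdAddChar.eq_iff,
      AddChar.map_zero_eq_one]
  split_ifs with hdvd
  · simp [hζ.mpr hdvd]
  · have hζn : ζ ^ n = 1 := by
      rw [← AddChar.map_nsmul_eq_pow, nsmul_eq_mul, ZMod.natCast_self, zero_mul,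
        AddChar.map_zero_eq_one]
    rw [geom_sum_eq (hζ.not.mpr hdvd), hζn, sub_self, zero_div, Complex.zero_re]

theorem posSemidef_fromBlocks_of_posSemidef_sub {n : Type*} [Fintype n] {a : ℝ} (ha : 0 < a)
    (b : n → ℝ) {M : Matrix n n ℝ} (hM : (M - a⁻¹ • vecMulVec b b).PosSemidef) :
    (fromBlocks (fun _ _ : Fin 1 => a) (fun _ j => b j) (fun i _ => b i) M).PosSemidef := by
  let A : Matrix (Fin 1) (Fin 1) ℝ := diagonal fun _ => a
  let B : Matrix (Fin 1) n ℝ := of fun _ j => b j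
  have hAinv : (diagonal fun _ => a⁻¹) * A = 1 := by
    rw [diagonal_mul_diagonal, ← diagonal_one]
    simp [ha.ne']
  let := invertibleOfLeftInverse A _ hAinv
  have hA : A.PosDef := posDef_diagonal_iff.mpr fun _ => ha
  have hAconst : (fun _ _ => a : Matrix (Fin 1) (Fin 1) ℝ) = A := by
    ext i j
    simp [A, Subsingleton.elim i j]
  have hBconj : (of fun i _ => b i : Matrix n (Fin 1) ℝ) = Bᴴ := by
    ext i j
    simp [B]
  have hSchur : Bᴴ * A⁻¹ * B = a⁻¹ • vecMulVec b b := by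
    ext i j
    simp only [conjTranspose_eq_transpose_of_trivial, inv_eq_left_inv hAinv, Matrix.mul_apply,
      univ_unique, Fin.default_eq_zero, transpose_apply, of_apply, sum_singleton,
      diagonal_apply_eq, Matrix.smul_apply, vecMulVec_apply, smul_eq_mul, B]
    ring
  change (fromBlocks _ B (of fun i _ => b i) M).PosSemidef
  rwa [hAconst, hBconj, PosDef.fromBlocks₁₁ _ _ hA, hSchur]

theorem Fin.val_add_one_mod_eq_iff_dvd {n : ℕ} (i j : Fin n) :
    (i.val + 1) % n = j.val ↔ (n : ℤ) ∣ (j.val : ℤ) - i.val - 1 := by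
  rw [← Nat.mod_eq_of_lt j.isLt, ← Nat.ModEq, Nat.modEq_iff_dvd, Nat.mod_eq_of_lt j.isLt]
  push_cast
  rw [sub_sub]

theorem Fin.val_mod_eq_val_mod_iff_dvd {n : ℕ} (i j : Fin n) (s : ℕ) :
    i.val % s = j.val % s ↔ (s : ℤ) ∣ (j.val : ℤ) - i.val :=
  Nat.modEq_iff_dvd

theorem Fin.eq_iff_dvd_sub {n : ℕ} (i j : Fin n) : i = j ↔ (n : ℤ) ∣ (j.val : ℤ) - i.val := by
  rw [Fin.ext_iff, ← Nat.modEq_iff_dvd]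
  exact ⟨fun h => h ▸ Nat.ModEq.refl _, fun h => h.eq_of_lt_of_lt i.isLt j.isLt⟩

theorem Int.two_mul_dvd_add_iff {s : ℤ} (hs : s ≠ 0) (e : ℤ) :
    2 * s ∣ e + s ↔ s ∣ e ∧ ¬ 2 * s ∣ e := by
  have key (c : ℤ) : 2 * s ∣ s * c ↔ 2 ∣ c := by rw [mul_comm 2 s, mul_dvd_mul_iff_left hs]
  constructor
  · intro h
    obtain ⟨c, rfl⟩ : s ∣ e := (dvd_add_left dvd_rfl).mp ((dvd_mul_left s 2).trans h)
    rw [show s * c + s = s * (c + 1) by ring, key] at h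
    exact ⟨dvd_mul_right s c, by rw [key]; omega⟩
  · rintro ⟨⟨c, rfl⟩, h⟩
    rw [key] at h
    rw [show s * c + s = s * (c + 1) by ring, key]
    omega

def cycleAdjMatrix (n : ℕ) : Matrix (Fin n) (Fin n) ℝ := fun i j =>
  if (i.val + 1) % n = j.val ∨ (j.val + 1) % n = i.val then 1 else 0

def antipodalMatrix (n s : ℕ) (f : ℝ) : Matrix (Fin n) (Fin n) ℝ := fun i j =>
  if i = j then 1 else if i.val % s = j.val % s then f else 0

/-- The antipodal entry `f` is split evenly between the offsets `±s`, which agree modulo `n = 2 s`,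
to match `2 cos (π m) cos (θ m d) = cos (θ m (d - s)) + cos (θ m (d + s))`. -/
noncomputable def cycleEntry (n s : ℕ) (l f : ℝ) (d : ℤ) : ℝ :=
  l * ((if (n : ℤ) ∣ d - 1 then 1 else 0) + (if (n : ℤ) ∣ d + 1 then 1 else 0))
    + (if (n : ℤ) ∣ d then 1 else 0)
    + f / 2 * ((if (n : ℤ) ∣ d - s then 1 else 0) + (if (n : ℤ) ∣ d + s then 1 else 0))

noncomputable def cycleEigenvalue (n : ℕ) (l f : ℝ) (m : ℕ) : ℝ :=
  2 * l * cos (2 * π / n * m) + 1 + f * cos (π * m)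

section cycle

variable {n s : ℕ}

theorem cycle_add_antipodal_apply (hns : n = 2 * s) (hn : 3 ≤ n) (l f : ℝ) (i j : Fin n) :
    (l • cycleAdjMatrix n + antipodalMatrix n s f) i j = cycleEntry n s l f (j.val - i.val) := by
  set d : ℤ := j.val - i.val
  have hadj₁ : (i.val + 1) % n = j.val ↔ (n : ℤ) ∣ d - 1 := Fin.val_add_one_mod_eq_iff_dvd i j
  have hadj₂ : (j.val + 1) % n = i.val ↔ (n : ℤ) ∣ d + 1 := by
    rw [Fin.val_add_one_mod_eq_iff_dvd, ← dvd_neg]; congr! 1; simp only [d]; ring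
  have hexcl : ¬ ((n : ℤ) ∣ d - 1 ∧ (n : ℤ) ∣ d + 1) := fun ⟨h₁, h₂⟩ => by
    have := Int.le_of_dvd two_pos (by simpa using dvd_sub h₂ h₁)
    omega
  have hn2 : (n : ℤ) = 2 * s := by rw [hns]; push_cast; ring
  have hsub : (n : ℤ) ∣ d - s ↔ (n : ℤ) ∣ d + s := by
    rw [← dvd_add_self_right, hn2]; ring_nf
  have hadd : (n : ℤ) ∣ d + s ↔ (s : ℤ) ∣ d ∧ ¬ (n : ℤ) ∣ d := by
    rw [hn2]; exact Int.two_mul_dvd_add_iff (by omega) d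
  have hadj : (if (n : ℤ) ∣ d - 1 ∨ (n : ℤ) ∣ d + 1 then (1 : ℝ) else 0)
      = (if (n : ℤ) ∣ d - 1 then 1 else 0) + (if (n : ℤ) ∣ d + 1 then 1 else 0) := by
    by_cases h₁ : (n : ℤ) ∣ d - 1 <;> by_cases h₂ : (n : ℤ) ∣ d + 1 <;> simp_all
  have hantipodal : (if (n : ℤ) ∣ d then (1 : ℝ) else if (s : ℤ) ∣ d then f else 0)
      = (if (n : ℤ) ∣ d then 1 else 0)
        + f / 2 * ((if (n : ℤ) ∣ d - s then 1 else 0) + (if (n : ℤ) ∣ d + s then 1 else 0)) := by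
    by_cases h₀ : (n : ℤ) ∣ d <;> by_cases h : (s : ℤ) ∣ d <;>
      simp only [h₀, h, hsub, hadd, ↓reduceIte, not_true_eq_false, not_false_eq_true, and_false,
        and_true, and_self, add_zero, zero_add, mul_zero]
    ring
  have hdiag : i = j ↔ (n : ℤ) ∣ d := Fin.eq_iff_dvd_sub i j
  have hmod : i.val % s = j.val % s ↔ (s : ℤ) ∣ d := Fin.val_mod_eq_val_mod_iff_dvd i j s
  simp only [Matrix.add_apply, Matrix.smul_apply, smul_eq_mul, cycleAdjMatrix, antipodalMatrix,
    hadj₁, hadj₂, hdiag, hmod, hadj, hantipodal, cycleEntry]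
  ring

theorem cycleEigenvalue_mul_cos [NeZero n] (hns : n = 2 * s) (l f : ℝ) (m : ℕ) (d : ℤ) :
    cycleEigenvalue n l f m * cos (2 * π / n * m * d) =
      l * (cos (2 * π / n * m * (d - 1 : ℤ)) + cos (2 * π / n * m * (d + 1 : ℤ)))
        + cos (2 * π / n * m * d)
        + f / 2 * (cos (2 * π / n * m * (d - s : ℤ)) + cos (2 * π / n * m * (d + s : ℤ))) := by
  have hπ : π * m = 2 * π / n * m * s := by
    have : (s : ℝ) ≠ 0 := by have := NeZero.ne n; norm_cast; omega
    rw [hns]; push_cast; field_simp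
  simp only [cycleEigenvalue, hπ, Int.cast_sub, Int.cast_add, Int.cast_one, Int.cast_natCast,
    mul_add, mul_sub, ← two_mul_cos_mul_cos]
  ring_nf

theorem sum_range_cycleEigenvalue_mul_cos [NeZero n] (hns : n = 2 * s) (l f : ℝ) (d : ℤ) :
    ∑ m ∈ range n, cycleEigenvalue n l f m * cos (2 * π / n * m * d) =
      n * cycleEntry n s l f d := by
  simp only [cycleEigenvalue_mul_cos hns, Finset.sum_add_distrib, ← Finset.mul_sum,
    sum_range_cos_eq_ite, cycleEntry]
  split_ifs <;> ring

theorem cycle_add_antipodal_eq_sum_cosKernel (hns : n = 2 * s) (hn : 3 ≤ n) (l f : ℝ) :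
    l • cycleAdjMatrix n + antipodalMatrix n s f = ∑ m ∈ range n,
      (cycleEigenvalue n l f m / n) • cosKernel (fun i : Fin n => (i.val : ℝ)) (2 * π / n * m) := by
  have : NeZero n := ⟨by omega⟩
  ext i j
  have hcos (m : ℕ) : cos (2 * π / n * m * (i.val - j.val : ℝ))
      = cos (2 * π / n * m * ((j.val - i.val : ℤ) : ℝ)) := by
    rw [← cos_neg]; push_cast; ring_nf
  calc _ = cycleEntry n s l f (j.val - i.val) := cycle_add_antipodal_apply hns hn l f i j
    _ = (∑ m ∈ range n, cycleEigenvalue n l f m * cos (2 * π / n * m * ((j.val - i.val : ℤ) : ℝ)))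
          / n := by
        rw [sum_range_cycleEigenvalue_mul_cos hns]
        field_simp [NeZero.ne (n : ℝ)]
    _ = _ := by
        rw [Finset.sum_div, Matrix.sum_apply]
        refine Finset.sum_congr rfl fun m _ => ?_
        simp only [Matrix.smul_apply, cosKernel, of_apply, smul_eq_mul, hcos]
        ring

end cycle

theorem cos_pi_div_two_mul_nonneg {N : ℕ} (hN : 1 ≤ N) : 0 ≤ cos (π / (2 * N)) := by
  have hN' : (1 : ℝ) ≤ N := by exact_mod_cast hN
  exact cos_nonneg_of_mem_Icc ⟨by linarith [show 0 ≤ π / (2 * N) by positivity, pi_pos],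
    div_le_div_of_nonneg_left pi_pos.le two_pos (by linarith)⟩

theorem neg_cos_le_cos_mul {N m : ℕ} (hN : 1 ≤ N) (hm : m < 4 * N) (hm' : m ≠ 2 * N) :
    -cos (π / (2 * N)) ≤ cos (π / (2 * N) * m) := by
  set θ := π / (2 * N)
  have hθ : θ * (2 * N) = π := by simp only [θ]; field_simp
  have hθ0 : 0 ≤ θ := by positivity
  have hfirst (k : ℕ) (hk : k + 1 ≤ 2 * N) : -cos θ ≤ cos (θ * k) := by
    have hk' : ((k : ℝ) + 1) ≤ 2 * N := by exact_mod_cast hk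
    rw [← cos_pi_sub]
    apply cos_le_cos_of_nonneg_of_le_pi (by positivity) (by linarith)
    nlinarith
  rcases Nat.lt_or_gt_of_ne hm' with h | h
  · exact hfirst m (by omega)
  · have hcos : cos (θ * m) = cos (θ * (4 * N - m : ℕ)) := by
      rw [Nat.cast_sub hm.le, ← cos_two_pi_sub]
      push_cast
      rw [← hθ]
      ring_nf
    rw [hcos]
    exact hfirst _ (by omega)

theorem cycleEigenvalue_nonneg {N m : ℕ} (hN : 1 ≤ N) (hm : m < 4 * N) :
    let k := cos (π / (2 * N))
    0 ≤ cycleEigenvalue (4 * N) (1 / (1 + k)) ((1 - k) / (1 + k)) m := by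
  intro k
  have hk : 0 ≤ k := cos_pi_div_two_mul_nonneg hN
  have hθ : 2 * π / ((4 * N : ℕ) : ℝ) = π / (2 * N) := by push_cast; field_simp; ring
  have hlam : cycleEigenvalue (4 * N) (1 / (1 + k)) ((1 - k) / (1 + k)) m
      = (2 * cos (π / (2 * N) * m) + (1 + k) + (1 - k) * (-1) ^ m) / (1 + k) := by
    rw [cycleEigenvalue, hθ, mul_comm π, cos_nat_mul_pi]
    field_simp
  rw [hlam]
  apply div_nonneg _ (by linarith)
  rcases Nat.even_or_odd m with he | ho
  · rw [he.neg_one_pow]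
    linarith [neg_one_le_cos (π / (2 * N) * m)]
  · rw [ho.neg_one_pow]
    have : m ≠ 2 * N := fun h => Nat.not_even_iff_odd.mpr ho (h ▸ even_two_mul N)
    linarith [neg_cos_le_cos_mul hN hm this]

/-- The dual certificate `Z_N^* = [[N/l, -e^T],[-e, M_N]]` for the chained Bell
inequality is positive semidefinite. -/
theorem ZN_star_posSemidef (N : ℕ) (hN : 2 ≤ N) :
    let k : ℝ := Real.cos (Real.pi / (2 * N))
    let f : ℝ := (1 - k) / (1 + k)
    let l : ℝ := 1 / (1 + k)
    let A : Matrix (Fin (4 * N)) (Fin (4 * N)) ℝ := fun i j =>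
      if (i.val + 1) % (4 * N) = j.val ∨ (j.val + 1) % (4 * N) = i.val then 1 else 0
    let D : Matrix (Fin (4 * N)) (Fin (4 * N)) ℝ := fun i j =>
      if i = j then 1 else if i.val % (2 * N) = j.val % (2 * N) then f else 0
    let M : Matrix (Fin (4 * N)) (Fin (4 * N)) ℝ := l • A + D
    let Z : Matrix (Fin 1 ⊕ Fin (4 * N)) (Fin 1 ⊕ Fin (4 * N)) ℝ :=
      Matrix.fromBlocks (fun _ _ => (N : ℝ) / l) (fun _ _ => -1) (fun _ _ => -1) M
    Z.PosSemidef := by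
  intro k f l A D M Z
  have hk : 0 < 1 + k := by linarith [cos_pi_div_two_mul_nonneg (N := N) (by omega)]
  have hl : 0 < l := by positivity
  have hM : M = ∑ m ∈ range (4 * N), (cycleEigenvalue (4 * N) l f m / (4 * N : ℕ)) •
      cosKernel (fun i : Fin (4 * N) => (i.val : ℝ)) (2 * π / (4 * N : ℕ) * m) :=
    cycle_add_antipodal_eq_sum_cosKernel (s := 2 * N) (by ring) (by omega) l f
  have hcoeff₀ : cycleEigenvalue (4 * N) l f 0 / (4 * N : ℕ) = ((N : ℝ) / l)⁻¹ := by
    have hfl : 1 + f = 2 * l := by simp only [f, l]; field_simp; ring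
    simp only [cycleEigenvalue, CharP.cast_eq_zero, mul_zero, cos_zero, mul_one]
    rw [show 2 * l + 1 + f = 4 * l by linarith]
    push_cast
    field_simp
  have hkernel₀ : cosKernel (fun i : Fin (4 * N) => (i.val : ℝ)) (2 * π / (4 * N : ℕ) * (0 : ℕ))
      = vecMulVec (fun _ => -1) (fun _ => -1) := by
    ext i j
    simp [cosKernel, vecMulVec_apply]
  refine posSemidef_fromBlocks_of_posSemidef_sub (by positivity) (fun _ => -1) ?_
  rw [hM, ← Finset.add_sum_erase _ _ (mem_range.mpr (by omega : 0 < 4 * N)), hcoeff₀, hkernel₀,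
    add_sub_cancel_left]
  exact posSemidef_sum _ fun m hm => (posSemidef_cosKernel _ _).smul
    (div_nonneg (cycleEigenvalue_nonneg (by omega) (mem_range.mp (mem_of_mem_erase hm)))
      (by positivity))
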